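/- arXiv:1810.08275 — 4 statements merged into one kernel-verified Lean document; each statement's English description precedes it below -/
import Mathlib

section
/- Let a₋ = (1/√2)(d/dx + x) and a₊ = (1/√2)(-d/dx + x) act on the Hermite functions ψₙ. Define Q₀ = (1/√2)(a₋Π₀ + Π₀a₊) with Π₀ = (1/2)(1+R). Then the functions ψ⁽⁰⁾_{n,ε} = (1/2)(ψ_{2n+1} + ε ψ_{2n+2}), ε = ±1, satisfy Q₀ ψ⁽⁰⁾_{n,ε} = ε√(n+1) ψ⁽⁰⁾_{n,ε}. -/
/-! On the span of `ψ (2n+1)` (odd) and `ψ (2n+2)` (even), `Π₀` kills odd and fixes even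
Hermite functions, so `Q₀ ψ (2n+1) = √(n+1) ψ (2n+2)` (through `a₊`) and
`Q₀ ψ (2n+2) = √(n+1) ψ (2n+1)` (through `a₋`). An operator swapping two vectors up to the
factor `c` has eigenvectors `u ± w` with eigenvalues `± c`. -/

namespace Module.End

variable {V : Type*} [AddCommGroup V] [Module ℝ V]

theorem half_one_add_apply_of_apply_eq_self {R : Module.End ℝ V} {v : V} (h : R v = v) :
    ((1 / 2 : ℝ) • (1 + R)) v = v := by
  rw [LinearMap.smul_apply, LinearMap.add_apply, one_apply, h, ← two_smul ℝ v, smul_smul]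
  norm_num

theorem half_one_add_apply_of_apply_eq_neg {R : Module.End ℝ V} {v : V} (h : R v = -v) :
    ((1 / 2 : ℝ) • (1 + R)) v = 0 := by
  rw [LinearMap.smul_apply, LinearMap.add_apply, one_apply, h, add_neg_cancel, smul_zero]

theorem apply_add_smul_of_swap {Q : Module.End ℝ V} {u w : V} {c ε : ℝ}
    (hu : Q u = c • w) (hw : Q w = c • u) (hε : ε * ε = 1) :
    Q (u + ε • w) = (ε * c) • (u + ε • w) := by
  rw [map_add, map_smul, hu, hw, smul_add, smul_smul, smul_smul,
    mul_right_comm, hε, one_mul, add_comm]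

end Module.End

theorem Real.sqrt_two_mul_add_two (x : ℝ) : √(2 * x + 2) = √2 * √(x + 1) := by
  rw [← Real.sqrt_mul zero_le_two]
  ring_nf

section HermiteLadder

open Module.End

variable {V : Type*} [AddCommGroup V] [Module ℝ V] {ψ : ℕ → V} {am ap R : Module.End ℝ V}
  (ham : ∀ n : ℕ, am (ψ n) = Real.sqrt n • ψ (n - 1))
  (hap : ∀ n : ℕ, ap (ψ n) = Real.sqrt (n + 1) • ψ (n + 1))
  (hR : ∀ n : ℕ, R (ψ n) = ((-1 : ℝ)) ^ n • ψ n)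
include hR

theorem half_one_add_apply_odd (n : ℕ) :
    ((1 / 2 : ℝ) • (1 + R)) (ψ (2 * n + 1)) = 0 :=
  half_one_add_apply_of_apply_eq_neg <| by
    rw [hR, (Nat.odd_iff.mpr (by omega)).neg_one_pow, neg_one_smul]

theorem half_one_add_apply_even (n : ℕ) :
    ((1 / 2 : ℝ) • (1 + R)) (ψ (2 * n + 2)) = ψ (2 * n + 2) :=
  half_one_add_apply_of_apply_eq_self <| by
    rw [hR, (Nat.even_iff.mpr (by omega)).neg_one_pow, one_smul]

include hap in
theorem supercharge_apply_odd (n : ℕ) :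
    ((√2)⁻¹ • (am * (1 / 2 : ℝ) • (1 + R) + (1 / 2 : ℝ) • (1 + R) * ap)) (ψ (2 * n + 1))
      = √(n + 1) • ψ (2 * n + 2) := by
  have hsqrt : √((2 * n + 1 : ℕ) + 1 : ℝ) = √2 * √(n + 1) := by
    push_cast
    rw [add_assoc, one_add_one_eq_two, Real.sqrt_two_mul_add_two]
  rw [LinearMap.smul_apply, LinearMap.add_apply, mul_apply, mul_apply, half_one_add_apply_odd hR, map_zero,
    zero_add, hap, map_smul, half_one_add_apply_even hR, hsqrt, smul_smul,
    inv_mul_cancel_left₀ (by positivity)]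

include ham hap in
theorem supercharge_apply_even (n : ℕ) :
    ((√2)⁻¹ • (am * (1 / 2 : ℝ) • (1 + R) + (1 / 2 : ℝ) • (1 + R) * ap)) (ψ (2 * n + 2))
      = √(n + 1) • ψ (2 * n + 1) := by
  have hsqrt : √((2 * n + 2 : ℕ) : ℝ) = √2 * √(n + 1) := by
    push_cast
    exact Real.sqrt_two_mul_add_two n
  rw [LinearMap.smul_apply, LinearMap.add_apply, mul_apply, mul_apply, half_one_add_apply_even hR, ham, hap,
    map_smul, show 2 * n + 2 + 1 = 2 * (n + 1) + 1 by ring, half_one_add_apply_odd hR,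
    smul_zero, add_zero, hsqrt, smul_smul, inv_mul_cancel_left₀ (by positivity)]
  rfl

end HermiteLadder

theorem stmt_4 {V : Type*} [AddCommGroup V] [Module ℝ V]
    (ψ : ℕ → V) (am ap R : Module.End ℝ V)
    (ham : ∀ n : ℕ, am (ψ n) = Real.sqrt n • ψ (n - 1))
    (hap : ∀ n : ℕ, ap (ψ n) = Real.sqrt (n + 1) • ψ (n + 1))
    (hR : ∀ n : ℕ, R (ψ n) = ((-1 : ℝ)) ^ n • ψ n)
    (Pi0 : Module.End ℝ V) (hPi0 : Pi0 = (1/2 : ℝ) • (1 + R))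
    (Q0 : Module.End ℝ V) (hQ0 : Q0 = (Real.sqrt 2)⁻¹ • (am * Pi0 + Pi0 * ap))
    (n : ℕ) (ε : ℝ) (hε : ε = 1 ∨ ε = -1) :
    Q0 ((1/2 : ℝ) • (ψ (2 * n + 1) + ε • ψ (2 * n + 2)))
      = (ε * Real.sqrt (n + 1)) • ((1/2 : ℝ) • (ψ (2 * n + 1) + ε • ψ (2 * n + 2))) := by
  subst hPi0 hQ0
  have hε2 : ε * ε = 1 := by rcases hε with rfl | rfl <;> norm_num
  rw [map_smul, Module.End.apply_add_smul_of_swap (supercharge_apply_odd hap hR n)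
    (supercharge_apply_even ham hap hR n) hε2, smul_comm]
end

section
/- The associated Hermite polynomials satisfy the connection formula Hₙ(x,c) = Σ_{k=0}^{⌊n/2⌋} ((-2)^k (c)_k (n-k)! / (k! (n-2k)!)) H_{n-2k}(x), where (c)_k denotes the Pochhammer symbol and Hₘ(x) are the ordinary physicists' Hermite polynomials. -/
/-- Associated Hermite polynomials `Hₙ(x,c)`. -/
noncomputable def assocHermite : ℕ → ℝ → ℝ → ℝ
  | 0, _, _ => 1
  | 1, x, _ => 2 * x
  | (n + 2), x, c => 2 * x * assocHermite (n + 1) x c - 2 * ((n + 1 : ℕ) + c) * assocHermite n x c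

/-- Physicists' Hermite polynomials `Hₘ(x)` (the case `c = 0`). -/
noncomputable def hermiteP : ℕ → ℝ → ℝ
  | 0, _ => 1
  | 1, x => 2 * x
  | (n + 2), x => 2 * x * hermiteP (n + 1) x - 2 * (n + 1) * hermiteP n x

/-!
Both sides satisfy the three-term recurrence of `assocHermite`. On the right, multiplying by `2x`
uses `2x Hₘ = Hₘ₊₁ + 2m Hₘ₋₁`; comparing coefficients of `H_{n-2k}` then amounts to Pascal's rule
together with `(m+1) C(m+k+1, k) = (m+k+1) C(m+k, k)`.
-/

open Finset

/-- The coefficient `(-2)^k (c)_k (n-k)! / (k! (n-2k)!)`, written as `(-2)^k (c)_k C(n-k, k)`: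
in this form it vanishes for `2k > n`, so the expansion may be summed over any range of `k`
beyond `n / 2`. -/
noncomputable def assocHermiteCoeff (c : ℝ) (n k : ℕ) : ℝ :=
  (-2) ^ k * (ascPochhammer ℝ k).eval c * ((n - k).choose k : ℝ)

@[simp]
lemma assocHermiteCoeff_zero_right (c : ℝ) (n : ℕ) : assocHermiteCoeff c n 0 = 1 := by
  simp [assocHermiteCoeff]

lemma assocHermiteCoeff_eq_zero {n k : ℕ} (c : ℝ) (h : n < 2 * k) :
    assocHermiteCoeff c n k = 0 := by
  rw [assocHermiteCoeff, Nat.choose_eq_zero_of_lt (by omega), Nat.cast_zero, mul_zero]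

lemma assocHermiteCoeff_eq_div_factorial {n k : ℕ} (c : ℝ) (h : 2 * k ≤ n) :
    assocHermiteCoeff c n k = (-2 : ℝ) ^ k * (ascPochhammer ℝ k).eval c * (n - k).factorial /
      (k.factorial * (n - 2 * k).factorial) := by
  rw [assocHermiteCoeff, Nat.cast_choose ℝ (by omega), show n - k - k = n - 2 * k by omega,
    mul_div_assoc]

lemma assocHermiteCoeff_add_two_add_one (c : ℝ) (n k : ℕ) :
    assocHermiteCoeff c (n + 2) (k + 1) =
      assocHermiteCoeff c (n + 1) (k + 1)
        + 2 * ((n + 1 - 2 * k : ℕ) : ℝ) * assocHermiteCoeff c (n + 1) k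
        - 2 * ((n + 1 : ℕ) + c) * assocHermiteCoeff c n k := by
  obtain h | ⟨m, rfl⟩ : n < 2 * k ∨ ∃ m, n = m + 2 * k :=
    (lt_or_ge n (2 * k)).imp_right fun h => ⟨n - 2 * k, by omega⟩
  · rw [assocHermiteCoeff_eq_zero c h, assocHermiteCoeff_eq_zero c (n := n + 2) (by omega),
      assocHermiteCoeff_eq_zero c (n := n + 1) (by omega), show n + 1 - 2 * k = 0 by omega]
    simp
  · have hchoose :
        (((m + k).choose k * (m + k + 1) : ℕ) : ℝ) = ((m + k + 1).choose k * (m + 1) : ℕ) := by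
      rw [Nat.choose_mul_succ_eq, Nat.add_right_comm, Nat.add_sub_cancel]
    simp only [assocHermiteCoeff, show m + 2 * k + 2 - (k + 1) = m + k + 1 by omega,
      show m + 2 * k + 1 - (k + 1) = m + k by omega, show m + 2 * k + 1 - k = m + k + 1 by omega,
      show m + 2 * k - k = m + k by omega, show m + 2 * k + 1 - 2 * k = m + 1 by omega,
      Nat.choose_succ_succ', ascPochhammer_succ_eval]
    push_cast at hchoose ⊢
    linear_combination (2 * (-2) ^ k * (ascPochhammer ℝ k).eval c) * hchoose

lemma two_mul_mul_hermiteP (m : ℕ) (x : ℝ) :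
    2 * x * hermiteP m x = hermiteP (m + 1) x + 2 * m * hermiteP (m - 1) x := by
  cases m with
  | zero => simp [hermiteP]
  | succ m => rw [hermiteP]; push_cast; ring

lemma two_mul_mul_assocHermiteCoeff_mul_hermiteP (c x : ℝ) (n k : ℕ) :
    2 * x * (assocHermiteCoeff c (n + 1) k * hermiteP (n + 1 - 2 * k) x) =
      assocHermiteCoeff c (n + 1) k * hermiteP (n + 2 - 2 * k) x
        + 2 * ((n + 1 - 2 * k : ℕ) : ℝ) * assocHermiteCoeff c (n + 1) k * hermiteP (n - 2 * k) x := by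
  rcases lt_or_ge (n + 1) (2 * k) with h | h
  · simp [assocHermiteCoeff_eq_zero c h]
  · rw [mul_left_comm, two_mul_mul_hermiteP, show n + 1 - 2 * k + 1 = n + 2 - 2 * k by omega,
      show n + 1 - 2 * k - 1 = n - 2 * k by omega]
    ring

theorem assocHermite_eq_sum_range (x c : ℝ) {n N : ℕ} (hN : n < 2 * N) :
    assocHermite n x c = ∑ k ∈ range N, assocHermiteCoeff c n k * hermiteP (n - 2 * k) x := by
  induction n using Nat.twoStepInduction generalizing N with
  | zero | one =>
    rw [sum_eq_single_of_mem 0 (mem_range.2 (by omega)) fun k _ hk => by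
      rw [assocHermiteCoeff_eq_zero c (by omega), zero_mul]]
    simp [assocHermite, hermiteP]
  | more n ih₀ ih₁ =>
    obtain ⟨M, rfl⟩ : ∃ M, N = M + 1 := ⟨N - 1, by omega⟩
    have hvanish : ((n + 1 - 2 * M : ℕ) : ℝ) * assocHermiteCoeff c (n + 1) M = 0 := by
      rcases (by omega : n + 1 = 2 * M ∨ n + 1 < 2 * M) with h | h
      · simp [h]
      · simp [assocHermiteCoeff_eq_zero c h]
    have hshift : ∀ k, n + 2 - 2 * (k + 1) = n - 2 * k := fun k => by omega
    rw [assocHermite, ih₁ (N := M + 1) (by omega), ih₀ (N := M) (by omega), mul_sum, mul_sum,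
      sum_congr rfl fun k _ => two_mul_mul_assocHermiteCoeff_mul_hermiteP c x n k, sum_add_distrib,
      sum_range_succ' (fun k => assocHermiteCoeff c (n + 1) k * _),
      sum_range_succ' (fun k => assocHermiteCoeff c (n + 2) k * _),
      sum_range_succ (fun k => 2 * _ * assocHermiteCoeff c (n + 1) k * _)]
    simp only [hshift, assocHermiteCoeff_add_two_add_one, add_mul, sub_mul, sum_add_distrib,
      sum_sub_distrib, assocHermiteCoeff_zero_right, mul_assoc]
    linear_combination (2 * hermiteP (n - 2 * M) x) * hvanish

theorem stmt_7 (n : ℕ) (x c : ℝ) :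
    assocHermite n x c =
      ∑ k ∈ Finset.range (n / 2 + 1),
        (-2 : ℝ) ^ k * (ascPochhammer ℝ k).eval c * (n - k).factorial /
          (k.factorial * (n - 2 * k).factorial) * hermiteP (n - 2 * k) x := by
  rw [assocHermite_eq_sum_range x c (N := n / 2 + 1) (by omega)]
  refine sum_congr rfl fun k hk => ?_
  rw [assocHermiteCoeff_eq_div_factorial c (by have := mem_range.1 hk; omega)]
end

section
/- Define Hⱼ = a₊a₋ + Σ_{k=0}^{r-1}(1+k-r/2)Π_{r+j-k-1 mod r} on the span of the basis of ℓ²(ℕ). Then Hⱼ|nr+j+s⟩ = (rn + r/2 + j)|nr+j+s⟩ for all n ∈ ℕ and s = 0,...,r-1; in particular each eigenvalue of Hⱼ is r-fold degenerate. -/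
/-! `a₊a₋` is the number operator, and on `|nr + j + s⟩` exactly one projector of the sum
fires, namely the one with `k = r - 1 - s`, contributing `(1 + (r - 1 - s) - r/2)`; adding the
eigenvalue `nr + j + s` of `a₊a₋` the dependence on `s` cancels. -/

open Finset

theorem mul_apply_single_eq_of_ladder {am ap : Module.End ℝ (ℕ →₀ ℝ)}
    (ham : ∀ n : ℕ, am (Finsupp.single n (1 : ℝ)) = √n • Finsupp.single (n - 1) (1 : ℝ))
    (hap : ∀ n : ℕ, ap (Finsupp.single n (1 : ℝ)) =
      √(n + 1) • Finsupp.single (n + 1) (1 : ℝ))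
    (n : ℕ) :
    (ap * am) (Finsupp.single n (1 : ℝ)) = (n : ℝ) • Finsupp.single n (1 : ℝ) := by
  rw [Module.End.mul_apply, ham, map_smul]
  cases n with
  | zero => simp
  | succ m =>
    rw [Nat.add_sub_cancel, hap, smul_smul, Nat.cast_succ,
      Real.mul_self_sqrt (by positivity)]

theorem add_mul_add_mod_eq_sub_mod_iff {r n j s k : ℕ} (hs : s < r) (hk : k < r) :
    (n * r + j + s) % r = (r + j - k - 1) % r ↔ k = r - 1 - s := by
  rw [show n * r + j + s = j + s + n * r by ring, Nat.add_mul_mod_self_right,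
    show r + j - k - 1 = j + (r - 1 - k) by omega]
  constructor
  · intro h
    have := (Nat.ModEq.add_left_cancel' j h).eq_of_lt_of_lt hs (by omega)
    omega
  · rintro rfl
    congr 2
    omega

theorem sum_smul_apply_single_of_unique_mod {r N k₀ : ℕ} (hk₀ : k₀ < r)
    {P : ℕ → Module.End ℝ (ℕ →₀ ℝ)}
    (hP : ∀ m n : ℕ, P m (Finsupp.single n (1 : ℝ)) =
      if n % r = m % r then Finsupp.single n (1 : ℝ) else 0)
    (c : ℕ → ℝ) (f : ℕ → ℕ) (hf : ∀ k < r, N % r = f k % r ↔ k = k₀) :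
    (∑ k ∈ range r, c k • P (f k)) (Finsupp.single N (1 : ℝ)) =
      c k₀ • Finsupp.single N (1 : ℝ) := by
  have hterm : ∀ k ∈ range r, (c k • P (f k)) (Finsupp.single N (1 : ℝ)) =
      if k = k₀ then c k • Finsupp.single N (1 : ℝ) else 0 := by
    intro k hk
    simp only [LinearMap.smul_apply, hP, hf k (mem_range.mp hk), smul_ite, smul_zero]
  rw [LinearMap.sum_apply, sum_congr rfl hterm, Finset.sum_ite_eq',
    if_pos (mem_range.mpr hk₀)]

theorem stmt_16_general (r : ℕ) (j : ℕ)
    (am ap : Module.End ℝ (ℕ →₀ ℝ))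
    (ham : ∀ n : ℕ, am (Finsupp.single n (1 : ℝ)) = Real.sqrt n • Finsupp.single (n - 1) (1 : ℝ))
    (hap : ∀ n : ℕ, ap (Finsupp.single n (1 : ℝ)) = Real.sqrt (n + 1) • Finsupp.single (n + 1) (1 : ℝ))
    (P : ℕ → Module.End ℝ (ℕ →₀ ℝ))
    (hP : ∀ m n : ℕ, P m (Finsupp.single n (1 : ℝ)) =
      if n % r = m % r then Finsupp.single n (1 : ℝ) else 0)
    (Hj : Module.End ℝ (ℕ →₀ ℝ))
    (hHj : Hj = ap * am +
      ∑ k ∈ Finset.range r, ((1 : ℝ) + k - r / 2) • P ((r + j - k - 1) % r)) :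
    ∀ n : ℕ, ∀ s < r,
      Hj (Finsupp.single (n * r + j + s) (1 : ℝ)) =
        ((r : ℝ) * n + r / 2 + j) • Finsupp.single (n * r + j + s) (1 : ℝ) := by
  intro n s hs
  have hfires : ∀ k < r, (n * r + j + s) % r = (r + j - k - 1) % r % r ↔ k = r - 1 - s :=
    fun k hk => by rw [Nat.mod_mod]; exact add_mul_add_mod_eq_sub_mod_iff hs hk
  rw [hHj, LinearMap.add_apply, mul_apply_single_eq_of_ladder ham hap,
    sum_smul_apply_single_of_unique_mod (by omega) hP _ _ hfires, ← add_smul]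
  congr 1
  rw [Nat.cast_sub (by omega), Nat.cast_sub (by omega)]
  push_cast
  ring

theorem stmt_16 (r : ℕ) (hr : 2 ≤ r) (j : ℕ) (hj : j < r)
    (am ap : Module.End ℝ (ℕ →₀ ℝ))
    (ham : ∀ n : ℕ, am (Finsupp.single n (1 : ℝ)) = Real.sqrt n • Finsupp.single (n - 1) (1 : ℝ))
    (hap : ∀ n : ℕ, ap (Finsupp.single n (1 : ℝ)) = Real.sqrt (n + 1) • Finsupp.single (n + 1) (1 : ℝ))
    (P : ℕ → Module.End ℝ (ℕ →₀ ℝ))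
    (hP : ∀ m n : ℕ, P m (Finsupp.single n (1 : ℝ)) =
      if n % r = m % r then Finsupp.single n (1 : ℝ) else 0)
    (Hj : Module.End ℝ (ℕ →₀ ℝ))
    (hHj : Hj = ap * am +
      ∑ k ∈ Finset.range r, ((1 : ℝ) + k - r / 2) • P ((r + j - k - 1) % r)) :
    ∀ n : ℕ, ∀ s < r,
      Hj (Finsupp.single (n * r + j + s) (1 : ℝ)) =
        ((r : ℝ) * n + r / 2 + j) • Finsupp.single (n * r + j + s) (1 : ℝ) :=
  stmt_16_general r j am ap ham hap P hP Hj hHj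
end

section
/- With Q_{j-} = a₋(1-Πⱼ), Q_{j+} = a₊(1-Π_{j-1}), and Hⱼ as above, the commutation relations [Hⱼ, Q_{j-}] = 0 and [Hⱼ, Q_{j+}] = 0 hold on the span of basis vectors. -/
/-!
In the basis `|n⟩`, `a₊a₋` is the number operator and the projection sum in `Hⱼ` selects
the single `k < r` with `n + k + 1 ≡ j (mod r)`, so `Hⱼ|n⟩ = (ν n - r / 2)|n⟩` where
`ν n = n + k + 1` is the first index after `n` in the class of `j`. Thus `ν` is constant on
the blocks `{j + t r, …, j + t r + r - 1}`. Both `Q_{j±}` are weighted shifts that stay inside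
a block, since `Q_{j-}` kills the bottom `n ≡ j` and `Q_{j+}` kills the top `n + 1 ≡ j`; so
they preserve the eigenspaces of `Hⱼ` and commute with it.
-/

open Finsupp

theorem Finsupp.commute_of_apply_single {ι R : Type*} [CommSemiring R]
    {H Q : Module.End R (ι →₀ R)} (μ c : ι → R) (σ : ι → ι)
    (hH : ∀ i, H (single i 1) = μ i • single i 1)
    (hQ : ∀ i, Q (single i 1) = c i • single (σ i) 1)
    (hμ : ∀ i, c i ≠ 0 → μ (σ i) = μ i) : Commute H Q := by
  ext i : 2
  simp only [LinearMap.comp_apply, lsingle_apply, Module.End.mul_apply]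
  rw [hQ, map_smul, hH, hH, map_smul, hQ, smul_smul, smul_smul]
  by_cases hc : c i = 0
  · simp [hc]
  · rw [hμ i hc, mul_comm]

theorem Module.End.mul_one_sub_apply_of_apply_eq_ite {R M : Type*} [CommRing R] [AddCommGroup M]
    [Module R M] {a p : Module.End R M} {x : M} {c : Prop} [Decidable c]
    (hp : p x = if c then x else 0) : (a * (1 - p)) x = if c then 0 else a x := by
  split_ifs at hp ⊢ <;> simp [hp]

/-- For `j < r`, the unique `k < r` with `n + k + 1 ≡ j [MOD r]`. -/
def residueGap (r j n : ℕ) : ℕ := (j + r - (n + 1) % r) % r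

section residueGap

variable {r j n k : ℕ}

theorem residueGap_lt (hr : 0 < r) : residueGap r j n < r := Nat.mod_lt _ hr

theorem add_residueGap_add_one_mod (hj : j < r) : (n + residueGap r j n + 1) % r = j := by
  have hlt := Nat.mod_lt (n + 1) (by omega : 0 < r)
  calc (n + residueGap r j n + 1) % r = ((n + 1) % r + (j + r - (n + 1) % r)) % r := by
        rw [residueGap, add_right_comm, Nat.add_mod_mod, Nat.mod_add_mod]
    _ = j := by rw [Nat.add_sub_cancel' (by omega), Nat.add_mod_right, Nat.mod_eq_of_lt hj]

theorem eq_residueGap_iff (hj : j < r) (hk : k < r) :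
    (n + k + 1) % r = j ↔ k = residueGap r j n := by
  refine ⟨fun h => ?_, fun h => h ▸ add_residueGap_add_one_mod hj⟩
  have hmod : n + k + 1 ≡ n + residueGap r j n + 1 [MOD r] :=
    h.trans (add_residueGap_add_one_mod hj).symm
  exact ((Nat.ModEq.refl 1).add_iff_right.mp hmod).add_left_cancel' n |>.eq_of_lt_of_lt hk
    (residueGap_lt (by omega))

theorem succ_add_residueGap_succ (hj : j < r) (h : (n + 1) % r ≠ j) :
    n + 1 + residueGap r j (n + 1) = n + residueGap r j n := by
  have hpos : residueGap r j n ≠ 0 := by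
    intro h0
    exact h (by simpa [h0] using add_residueGap_add_one_mod (n := n) hj)
  have := (eq_residueGap_iff (n := n + 1) hj
    ((Nat.sub_le _ 1).trans_lt (residueGap_lt (by omega)))).mp
    (by rw [show n + 1 + (residueGap r j n - 1) + 1 = n + residueGap r j n + 1 by omega]
        exact add_residueGap_add_one_mod hj)
  omega

theorem mod_eq_mod_sub_iff (hj : j < r) (hk : k < r) :
    n % r = (r + j - k - 1) % r ↔ (n + k + 1) % r = j := by
  have hsum : r + j - k - 1 + (k + 1) = j + r := by omega
  calc n ≡ r + j - k - 1 [MOD r] ↔ n + (k + 1) ≡ r + j - k - 1 + (k + 1) [MOD r] :=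
        ((Nat.ModEq.refl (k + 1)).add_iff_right).symm
    _ ↔ (n + k + 1) % r = j := by
        rw [hsum, ← add_assoc, Nat.ModEq, Nat.add_mod_right, Nat.mod_eq_of_lt hj]

theorem succ_mod_eq_iff (hj : j < r) : (n + 1) % r = j ↔ n % r = (j + r - 1) % r := by
  rw [show j + r - 1 = r + j - 0 - 1 by omega, mod_eq_mod_sub_iff hj (by omega)]

end residueGap

theorem raise_mul_lower_apply_single {am ap : Module.End ℝ (ℕ →₀ ℝ)}
    (ham : ∀ n : ℕ, am (single n (1 : ℝ)) = Real.sqrt n • single (n - 1) (1 : ℝ))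
    (hap : ∀ n : ℕ, ap (single n (1 : ℝ)) = Real.sqrt (n + 1) • single (n + 1) (1 : ℝ))
    (n : ℕ) : (ap * am) (single n 1) = (n : ℝ) • single n 1 := by
  rcases n with _ | n
  · simp [ham]
  · rw [Module.End.mul_apply, ham, map_smul, hap, smul_smul, Nat.add_sub_cancel, Nat.cast_succ,
      Real.mul_self_sqrt (by positivity)]

theorem sum_smul_proj_apply_single {r j : ℕ} (hj : j < r) {P : ℕ → Module.End ℝ (ℕ →₀ ℝ)}
    (hP : ∀ m n : ℕ, P m (single n (1 : ℝ)) = if n % r = m % r then single n (1 : ℝ) else 0)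
    (c : ℕ → ℝ) (n : ℕ) :
    (∑ k ∈ Finset.range r, c k • P ((r + j - k - 1) % r)) (single n 1) =
      c (residueGap r j n) • single n 1 := by
  rw [LinearMap.sum_apply, Finset.sum_eq_single_of_mem _
    (Finset.mem_range.mpr (residueGap_lt (by omega)))]
  · rw [LinearMap.smul_apply, hP, Nat.mod_mod, if_pos]
    rw [mod_eq_mod_sub_iff hj (residueGap_lt (by omega)), eq_residueGap_iff hj (residueGap_lt (by omega))]
  · intro k hk hne
    rw [LinearMap.smul_apply, hP, Nat.mod_mod, if_neg, smul_zero]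
    rwa [mod_eq_mod_sub_iff hj (Finset.mem_range.mp hk), eq_residueGap_iff hj (Finset.mem_range.mp hk)]

theorem hamiltonian_apply_single {r j : ℕ} (hj : j < r) {am ap : Module.End ℝ (ℕ →₀ ℝ)}
    (ham : ∀ n : ℕ, am (single n (1 : ℝ)) = Real.sqrt n • single (n - 1) (1 : ℝ))
    (hap : ∀ n : ℕ, ap (single n (1 : ℝ)) = Real.sqrt (n + 1) • single (n + 1) (1 : ℝ))
    {P : ℕ → Module.End ℝ (ℕ →₀ ℝ)}
    (hP : ∀ m n : ℕ, P m (single n (1 : ℝ)) = if n % r = m % r then single n (1 : ℝ) else 0)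
    (n : ℕ) :
    (ap * am + ∑ k ∈ Finset.range r, ((1 : ℝ) + k - r / 2) • P ((r + j - k - 1) % r))
      (single n 1) = (((n + residueGap r j n : ℕ) : ℝ) + 1 - r / 2) • single n 1 := by
  rw [LinearMap.add_apply, raise_mul_lower_apply_single ham hap,
    sum_smul_proj_apply_single hj hP, ← add_smul]
  push_cast
  ring_nf

theorem stmt_17_general (r : ℕ) (j : ℕ) (hj : j < r)
    (am ap : Module.End ℝ (ℕ →₀ ℝ))
    (ham : ∀ n : ℕ, am (Finsupp.single n (1 : ℝ)) = Real.sqrt n • Finsupp.single (n - 1) (1 : ℝ))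
    (hap : ∀ n : ℕ, ap (Finsupp.single n (1 : ℝ)) = Real.sqrt (n + 1) • Finsupp.single (n + 1) (1 : ℝ))
    (P : ℕ → Module.End ℝ (ℕ →₀ ℝ))
    (hP : ∀ m n : ℕ, P m (Finsupp.single n (1 : ℝ)) =
      if n % r = m % r then Finsupp.single n (1 : ℝ) else 0)
    (Hj : Module.End ℝ (ℕ →₀ ℝ))
    (hHj : Hj = ap * am +
      ∑ k ∈ Finset.range r, ((1 : ℝ) + k - r / 2) • P ((r + j - k - 1) % r)) :
    Hj * (am * (1 - P j)) - (am * (1 - P j)) * Hj = 0 ∧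
    Hj * (ap * (1 - P ((j + r - 1) % r))) - (ap * (1 - P ((j + r - 1) % r))) * Hj = 0 := by
  subst hHj
  have hH := hamiltonian_apply_single hj ham hap hP
  have hμ (n : ℕ) (h : (n + 1) % r ≠ j) :=
    congrArg (fun m : ℕ => (m : ℝ) + 1 - r / 2) (succ_add_residueGap_succ hj h)
  constructor
  · refine sub_eq_zero.mpr (Finsupp.commute_of_apply_single _
      (fun n => if n % r = j then 0 else Real.sqrt n) (· - 1) hH (fun n => ?_) ?_).eq
    · rw [Module.End.mul_one_sub_apply_of_apply_eq_ite (by rw [hP, Nat.mod_eq_of_lt hj]), ham,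
        ite_smul, zero_smul]
    · rintro (_ | n) hc
      · simp at hc
      · exact (hμ n fun h => hc (if_pos h)).symm
  · refine sub_eq_zero.mpr (Finsupp.commute_of_apply_single _
      (fun n => if n % r = (j + r - 1) % r then 0 else Real.sqrt (n + 1)) (· + 1) hH
      (fun n => ?_) ?_).eq
    · rw [Module.End.mul_one_sub_apply_of_apply_eq_ite (by rw [hP, Nat.mod_mod]), hap,
        ite_smul, zero_smul]
    · exact fun n hc => hμ n fun h => hc (if_pos ((succ_mod_eq_iff hj).mp h))

theorem stmt_17 (r : ℕ) (hr : 2 ≤ r) (j : ℕ) (hj : j < r)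
    (am ap : Module.End ℝ (ℕ →₀ ℝ))
    (ham : ∀ n : ℕ, am (Finsupp.single n (1 : ℝ)) = Real.sqrt n • Finsupp.single (n - 1) (1 : ℝ))
    (hap : ∀ n : ℕ, ap (Finsupp.single n (1 : ℝ)) = Real.sqrt (n + 1) • Finsupp.single (n + 1) (1 : ℝ))
    (P : ℕ → Module.End ℝ (ℕ →₀ ℝ))
    (hP : ∀ m n : ℕ, P m (Finsupp.single n (1 : ℝ)) =
      if n % r = m % r then Finsupp.single n (1 : ℝ) else 0)
    (Hj : Module.End ℝ (ℕ →₀ ℝ))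
    (hHj : Hj = ap * am +
      ∑ k ∈ Finset.range r, ((1 : ℝ) + k - r / 2) • P ((r + j - k - 1) % r)) :
    Hj * (am * (1 - P j)) - (am * (1 - P j)) * Hj = 0 ∧
    Hj * (ap * (1 - P ((j + r - 1) % r))) - (ap * (1 - P ((j + r - 1) % r))) * Hj = 0 :=
  stmt_17_general r j hj am ap ham hap P hP Hj hHj
end
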